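/- arXiv:2604.23864 — 2 statements merged into one kernel-verified Lean document; each statement's English description precedes it below -/
import Mathlib

section
/- Let d ≥ 1 be an integer and let K : ℝ^d → ℂ be differentiable at every point of ℝ^d ∖ {0} with ‖K'(y)‖ ≤ M · ‖y‖^{−(d+1)} for all y ≠ 0, where M > 0. Then there is a constant C depending only on d (one may take C = 2d · 3^{d−1} · π^{−(d+1)}) such that for every integer R ≥ 1 and every x ∈ ℝ^d with ‖x‖ ≤ πR, one has | ∑_{m ∈ ℤ^d, ‖m‖_∞ = R} ( K(x + 2πm) − K(2πm) ) | ≤ C · M · ‖x‖ / R². -/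
open Metric

/-- The lattice point `2πm ∈ ℝ^d` associated with `m ∈ ℤ^d`. -/
noncomputable def latticePoint (d : ℕ) (m : Fin d → ℤ) : EuclideanSpace ℝ (Fin d) :=
  WithLp.toLp 2 (fun i => 2 * Real.pi * m i)

/-- The finite shell `{m ∈ ℤ^d : ‖m‖_∞ = R}` as a `Finset`. -/
noncomputable def latticeShell (d R : ℕ) : Finset (Fin d → ℤ) :=
  (Fintype.piFinset fun _ : Fin d => Finset.Icc (-(R : ℤ)) (R : ℤ)).filter
    fun m => ∃ i, |m i| = (R : ℤ)

lemma coord_abs_le_norm {d : ℕ} (y : EuclideanSpace ℝ (Fin d)) (i : Fin d) :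
    |y i| ≤ ‖y‖ := by
  rw [EuclideanSpace.norm_eq]
  rw [show |y i| = Real.sqrt (‖y i‖ ^ 2) by
    rw [Real.sqrt_sq_eq_abs]; simp [abs_abs]]
  apply Real.sqrt_le_sqrt
  exact Finset.single_le_sum (f := fun j => ‖y j‖ ^ 2)
    (fun j _ => sq_nonneg _) (Finset.mem_univ i)

lemma latticeShell_card_le {d R : ℕ} (hd : 1 ≤ d) (hR : 1 ≤ R) :
    (latticeShell d R).card ≤ 2 * d * (2 * R + 1) ^ (d - 1) := by
  classical
  set S : Fin d → Finset (Fin d → ℤ) := fun i =>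
    Fintype.piFinset fun j => if j = i then ({-(R : ℤ), (R : ℤ)} : Finset ℤ)
      else Finset.Icc (-(R : ℤ)) (R : ℤ) with hS
  have hsub : latticeShell d R ⊆ Finset.univ.biUnion S := by
    intro m hm
    rw [latticeShell, Finset.mem_filter] at hm
    obtain ⟨hbox, i, hi⟩ := hm
    rw [Fintype.mem_piFinset] at hbox
    refine Finset.mem_biUnion.2 ⟨i, Finset.mem_univ _, ?_⟩
    rw [hS, Fintype.mem_piFinset]
    intro j
    by_cases hji : j = i
    · subst hji
      rw [if_pos rfl]
      rcases abs_eq (by positivity : (0:ℤ) ≤ (R:ℤ)) |>.1 hi with h | h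
      · simp [h]
      · simp [h]
    · simp only [if_neg hji]
      exact hbox j
  have hScard : ∀ i, (S i).card = 2 * (2 * R + 1) ^ (d - 1) := by
    intro i
    rw [hS, Fintype.card_piFinset]
    have h2 : ({-(R : ℤ), (R : ℤ)} : Finset ℤ).card = 2 := by
      rw [Finset.card_insert_of_notMem, Finset.card_singleton]
      simp only [Finset.mem_singleton]
      omega
    have hIcc : (Finset.Icc (-(R : ℤ)) (R : ℤ)).card = 2 * R + 1 := by
      rw [Int.card_Icc]; omega
    calc ∏ j : Fin d, (if j = i then ({-(R : ℤ), (R : ℤ)} : Finset ℤ)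
          else Finset.Icc (-(R : ℤ)) (R : ℤ)).card
        = (if i = i then ({-(R : ℤ), (R : ℤ)} : Finset ℤ)
            else Finset.Icc (-(R : ℤ)) (R : ℤ)).card *
          ∏ j ∈ Finset.univ.erase i, (if j = i then ({-(R : ℤ), (R : ℤ)} : Finset ℤ)
            else Finset.Icc (-(R : ℤ)) (R : ℤ)).card :=
          (Finset.mul_prod_erase _ _ (Finset.mem_univ i)).symm
      _ = 2 * (2 * R + 1) ^ (d - 1) := by
          rw [if_pos rfl, h2]
          congr 1
          rw [Finset.prod_congr rfl (fun j hj => by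
            rw [if_neg (Finset.mem_erase.1 hj).1, hIcc]), Finset.prod_const,
            Finset.card_erase_of_mem (Finset.mem_univ i), Finset.card_univ,
            Fintype.card_fin]
  calc (latticeShell d R).card ≤ (Finset.univ.biUnion S).card := Finset.card_le_card hsub
    _ ≤ ∑ i : Fin d, (S i).card := Finset.card_biUnion_le
    _ = d * (2 * (2 * R + 1) ^ (d - 1)) := by
        rw [Finset.sum_congr rfl (fun i _ => hScard i), Finset.sum_const, Finset.card_univ,
          Fintype.card_fin, smul_eq_mul]
    _ = 2 * d * (2 * R + 1) ^ (d - 1) := by ring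

lemma latticePoint_norm_ge {d R : ℕ} {m : Fin d → ℤ}
    (hm : m ∈ latticeShell d R) : 2 * Real.pi * R ≤ ‖latticePoint d m‖ := by
  rw [latticeShell, Finset.mem_filter] at hm
  obtain ⟨-, i, hi⟩ := hm
  have h1 : |latticePoint d m i| ≤ ‖latticePoint d m‖ := coord_abs_le_norm _ i
  have h2 : |latticePoint d m i| = 2 * Real.pi * R := by
    show |2 * Real.pi * (m i : ℝ)| = 2 * Real.pi * R
    rw [abs_mul, abs_of_pos (by positivity : (0:ℝ) < 2 * Real.pi)]
    congr 1
    rw [← Int.cast_abs, hi, Int.cast_natCast]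
  linarith

/-- If `K : ℝ^d → ℂ` is differentiable away from `0` with
`‖K'(y)‖ ≤ M · ‖y‖^{−(d+1)}`, then there is a constant `C` depending only on `d` such that
for every integer `R ≥ 1` and every `x` with `‖x‖ ≤ πR`,
`|∑_{‖m‖_∞ = R} (K(x + 2πm) − K(2πm))| ≤ C · M · ‖x‖ / R²`. -/
theorem shell_sum_difference_estimate (d : ℕ) (hd : 1 ≤ d) :
    ∃ C : ℝ, 0 < C ∧
      ∀ (K : EuclideanSpace ℝ (Fin d) → ℂ) (M : ℝ), 0 < M →
        (∀ y : EuclideanSpace ℝ (Fin d), y ≠ 0 →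
          DifferentiableAt ℝ K y ∧ ‖fderiv ℝ K y‖ ≤ M * ‖y‖ ^ (-(d + 1 : ℤ))) →
        ∀ R : ℕ, 1 ≤ R → ∀ x : EuclideanSpace ℝ (Fin d), ‖x‖ ≤ Real.pi * R →
          ‖∑ m ∈ latticeShell d R, (K (x + latticePoint d m) - K (latticePoint d m))‖
            ≤ C * M * ‖x‖ / R ^ 2 := by
  have hpi : (0:ℝ) < Real.pi := Real.pi_pos
  refine ⟨2 * d * 3 ^ (d - 1) / Real.pi ^ (d + 1), by positivity, ?_⟩
  intro K M hM hK R hR x hx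
  have hRpos : (0:ℝ) < R := by exact_mod_cast hR
  have hpiR : (0:ℝ) < Real.pi * R := by positivity
  -- lower bound on the norm of points in the segments
  have hseg : ∀ m ∈ latticeShell d R, ∀ y ∈ segment ℝ (latticePoint d m)
      (x + latticePoint d m), Real.pi * R ≤ ‖y‖ := by
    intro m hm y hy
    rw [segment_eq_image'] at hy
    obtain ⟨t, ht, rfl⟩ := hy
    have hba : x + latticePoint d m - latticePoint d m = x := by abel
    rw [hba]
    have h1 : 2 * Real.pi * R ≤ ‖latticePoint d m‖ := latticePoint_norm_ge hm
    have h2 : ‖t • x‖ ≤ Real.pi * R := by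
      rw [norm_smul, Real.norm_eq_abs, abs_of_nonneg ht.1]
      calc t * ‖x‖ ≤ 1 * ‖x‖ := by
            apply mul_le_mul_of_nonneg_right ht.2 (norm_nonneg _)
        _ ≤ Real.pi * R := by rw [one_mul]; exact hx
    calc Real.pi * R = 2 * Real.pi * R - Real.pi * R := by ring
      _ ≤ ‖latticePoint d m‖ - ‖t • x‖ := by linarith
      _ ≤ ‖latticePoint d m + t • x‖ := by
          have h4 := norm_sub_le (latticePoint d m + t • x) (t • x)
          have h5 : latticePoint d m + t • x - t • x = latticePoint d m := by abel
          rw [h5] at h4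
          linarith
  -- per-term estimate
  have hterm : ∀ m ∈ latticeShell d R,
      ‖K (x + latticePoint d m) - K (latticePoint d m)‖
        ≤ M * ((Real.pi * R) ^ (d + 1))⁻¹ * ‖x‖ := by
    intro m hm
    have hne : ∀ y ∈ segment ℝ (latticePoint d m) (x + latticePoint d m), y ≠ 0 := by
      intro y hy h0
      have := hseg m hm y hy
      rw [h0, norm_zero] at this
      linarith
    have hbound : ∀ y ∈ segment ℝ (latticePoint d m) (x + latticePoint d m),
        ‖fderiv ℝ K y‖ ≤ M * ((Real.pi * R) ^ (d + 1))⁻¹ := by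
      intro y hy
      have hy0 := hne y hy
      have hyn := hseg m hm y hy
      refine le_trans (hK y hy0).2 ?_
      have hzpow : ‖y‖ ^ (-(d + 1 : ℤ)) ≤ ((Real.pi * R) ^ (d + 1))⁻¹ := by
        rw [show (-(d + 1 : ℤ)) = -((d + 1 : ℕ) : ℤ) by push_cast; ring,
          zpow_neg, zpow_natCast]
        exact inv_anti₀ (by positivity)
          (pow_le_pow_left₀ (le_of_lt hpiR) hyn _)
      exact mul_le_mul_of_nonneg_left hzpow (le_of_lt hM)
    have := (convex_segment (latticePoint d m) (x + latticePoint d m)).norm_image_sub_le_of_norm_fderiv_le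
      (fun y hy => (hK y (hne y hy)).1) hbound
      (left_mem_segment ℝ _ _) (right_mem_segment ℝ _ _)
    calc ‖K (x + latticePoint d m) - K (latticePoint d m)‖
        ≤ M * ((Real.pi * R) ^ (d + 1))⁻¹ * ‖x + latticePoint d m - latticePoint d m‖ :=
          this
      _ = M * ((Real.pi * R) ^ (d + 1))⁻¹ * ‖x‖ := by
          congr 1; congr 1; abel
  -- sum up
  have hsum : ‖∑ m ∈ latticeShell d R,
      (K (x + latticePoint d m) - K (latticePoint d m))‖
      ≤ (latticeShell d R).card * (M * ((Real.pi * R) ^ (d + 1))⁻¹ * ‖x‖) := by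
    refine le_trans (norm_sum_le _ _) ?_
    calc ∑ m ∈ latticeShell d R, ‖K (x + latticePoint d m) - K (latticePoint d m)‖
        ≤ ∑ _m ∈ latticeShell d R, M * ((Real.pi * R) ^ (d + 1))⁻¹ * ‖x‖ :=
          Finset.sum_le_sum hterm
      _ = (latticeShell d R).card * (M * ((Real.pi * R) ^ (d + 1))⁻¹ * ‖x‖) := by
          rw [Finset.sum_const, nsmul_eq_mul]
  refine hsum.trans ?_
  have hcard : ((latticeShell d R).card : ℝ) ≤ 2 * d * 3 ^ (d - 1) * (R : ℝ) ^ (d - 1) := by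
    calc ((latticeShell d R).card : ℝ)
        ≤ (2 * d * (2 * R + 1) ^ (d - 1) : ℕ) := by
          exact_mod_cast latticeShell_card_le hd hR
      _ = 2 * d * ((2 * (R:ℝ) + 1)) ^ (d - 1) := by push_cast; ring
      _ ≤ 2 * d * (3 * (R:ℝ)) ^ (d - 1) := by
          apply mul_le_mul_of_nonneg_left _ (by positivity)
          apply pow_le_pow_left₀ (by positivity)
          have hR1 : (1:ℝ) ≤ (R:ℝ) := by exact_mod_cast hR
          linarith
      _ = 2 * d * 3 ^ (d - 1) * (R : ℝ) ^ (d - 1) := by rw [mul_pow]; ring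
  have hRd : (R : ℝ) ^ (d - 1) * (R : ℝ) ^ 2 = (R : ℝ) ^ (d + 1) := by
    rw [← pow_add]
    congr 1
    omega
  have hstep : ((latticeShell d R).card : ℝ) * (M * ((Real.pi * R) ^ (d + 1))⁻¹ * ‖x‖)
      ≤ 2 * d * 3 ^ (d - 1) * (R : ℝ) ^ (d - 1) * (M * ((Real.pi * R) ^ (d + 1))⁻¹ * ‖x‖) :=
    mul_le_mul_of_nonneg_right hcard (by positivity)
  refine hstep.trans (le_of_eq ?_)
  rw [mul_pow]
  field_simp
  rw [← hRd]
  ring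
end

section
/- Let d ≥ 1 be an integer and let K : ℝ^d → ℂ be differentiable at every point of ℝ^d ∖ {0} with ‖K'(y)‖ ≤ M · ‖y‖^{−(d+1)} for all y ≠ 0, where M > 0, and suppose that for every integer R ≥ 1 one has | ∑_{m ∈ ℤ^d, ‖m‖_∞ = R} K(2πm) | ≤ M / R². Then for every x ∈ ℝ^d ∖ 2πℤ^d, the series of shell sums converges absolutely: ∑_{R=1}^{∞} | ∑_{m ∈ ℤ^d, ‖m‖_∞ = R} K(x + 2πm) | < ∞, i.e. the function R ↦ ∑_{‖m‖_∞ = R} K(x + 2πm) is summable over R ≥ 1. -/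
open Finset Real in
lemma icc_card (R : ℕ) : (Finset.Icc (-(R : ℤ)) (R : ℤ)).card = 2 * R + 1 := by
  rw [Int.card_Icc]; omega

open Finset Real in
lemma shell_card (d R : ℕ) : (latticeShell d R).card ≤ 2 * d * (2 * R + 1) ^ (d - 1) := by
  classical
  have hsub : latticeShell d R ⊆ univ.biUnion (fun i : Fin d =>
      (latticeShell d R).filter fun m => |m i| = (R : ℤ)) := by
    intro m hm
    obtain ⟨i, hi⟩ := (Finset.mem_filter.1 hm).2
    exact Finset.mem_biUnion.2 ⟨i, mem_univ i, Finset.mem_filter.2 ⟨hm, hi⟩⟩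
  have hpart : ∀ i : Fin d,
      ((latticeShell d R).filter fun m => |m i| = (R : ℤ)).card ≤ 2 * (2 * R + 1) ^ (d - 1) := by
    intro i
    set T := (Finset.univ : Finset Bool) ×ˢ
      Fintype.piFinset (fun j : Fin d => if j = i then ({0} : Finset ℤ) else Finset.Icc (-(R:ℤ)) R)
    have hcardT : T.card = 2 * (2 * R + 1) ^ (d - 1) := by
      have hprod : ∏ j : Fin d,
          (if j = i then ({0} : Finset ℤ) else Finset.Icc (-(R:ℤ)) R).card
          = (2*R+1)^(d-1) := by
        rw [← Finset.mul_prod_erase _ _ (mem_univ i)]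
        simp only [if_pos rfl, if_true, Finset.card_singleton, one_mul]
        rw [Finset.prod_congr rfl (fun j hj => by
            rw [if_neg (Finset.ne_of_mem_erase hj), icc_card]),
          Finset.prod_const, Finset.card_erase_of_mem (mem_univ i),
          Finset.card_univ, Fintype.card_fin]
      rw [Finset.card_product, Fintype.card_piFinset, hprod]
      simp [Finset.card_univ]
    rw [← hcardT]
    apply Finset.card_le_card_of_injOn (fun m => (decide (m i = (R:ℤ)), Function.update m i 0))
    · intro m hm
      simp only [Finset.mem_coe, Finset.mem_filter] at hm ⊢
      obtain ⟨hm1, hi⟩ := hm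
      refine Finset.mem_product.2 ⟨mem_univ _, ?_⟩
      rw [Fintype.mem_piFinset]
      intro j
      dsimp only
      by_cases hj : j = i
      · subst hj; simp [Function.update_self]
      · rw [if_neg hj, Function.update_of_ne hj]
        exact Fintype.mem_piFinset.1 (Finset.mem_filter.1 hm1).1 j
    · intro m hm m' hm' heq
      rw [coe_filter] at hm hm'
      obtain ⟨-, hmi⟩ := hm
      obtain ⟨-, hmi'⟩ := hm'
      simp only [Prod.mk.injEq] at heq
      obtain ⟨h1, h2⟩ := heq
      funext j
      by_cases hj : j = i
      · subst hj
        rcases abs_eq (by positivity : (0:ℤ) ≤ (R:ℤ)) |>.1 hmi with h | h <;>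
          rcases abs_eq (by positivity : (0:ℤ) ≤ (R:ℤ)) |>.1 hmi' with h' | h' <;>
          simp [h, h'] at h1 ⊢ <;> omega
      · have := congrFun h2 j
        rwa [Function.update_of_ne hj, Function.update_of_ne hj] at this
  calc (latticeShell d R).card ≤ (univ.biUnion _).card := Finset.card_le_card hsub
    _ ≤ ∑ i : Fin d, ((latticeShell d R).filter fun m => |m i| = (R : ℤ)).card :=
        Finset.card_biUnion_le
    _ ≤ ∑ _i : Fin d, 2 * (2 * R + 1) ^ (d - 1) := Finset.sum_le_sum fun i _ => hpart i
    _ = 2 * d * (2 * R + 1) ^ (d - 1) := by simp [mul_comm, mul_assoc, mul_left_comm]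

open Finset Real in
lemma coord_le_norm' (d : ℕ) (v : EuclideanSpace ℝ (Fin d)) (i : Fin d) : |v i| ≤ ‖v‖ := by
  rw [EuclideanSpace.norm_eq]
  refine (Real.le_sqrt (abs_nonneg _) (Finset.sum_nonneg fun j _ => sq_nonneg _)).2 ?_
  rw [sq_abs]
  calc v i ^ 2 ≤ ∑ j, v j ^ 2 := Finset.single_le_sum (fun j _ => sq_nonneg (v j)) (Finset.mem_univ i)
    _ = ∑ j, ‖v j‖ ^ 2 := by simp [Real.norm_eq_abs, sq_abs]

open Finset Real in
lemma shell_norm_ge (d R : ℕ) (m : Fin d → ℤ) (hm : m ∈ latticeShell d R) :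
    2 * π * R ≤ ‖latticePoint d m‖ := by
  obtain ⟨i, hi⟩ := (Finset.mem_filter.1 hm).2
  have h1 : |latticePoint d m i| = 2 * π * R := by
    show |2 * π * (m i : ℝ)| = 2 * π * R
    rw [abs_mul, abs_of_nonneg (by positivity : (0:ℝ) ≤ 2 * π)]
    rw [← Int.cast_abs, hi]
    norm_num
  calc 2 * π * R = |latticePoint d m i| := h1.symm
    _ ≤ ‖latticePoint d m‖ := coord_le_norm' d _ i

open Finset Real in
lemma mvt_bound (d : ℕ) (hd : 1 ≤ d) (K : EuclideanSpace ℝ (Fin d) → ℂ) (M : ℝ)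
    (hdiff : ∀ y : EuclideanSpace ℝ (Fin d), y ≠ 0 →
      DifferentiableAt ℝ K y ∧ ‖fderiv ℝ K y‖ ≤ M * ‖y‖ ^ (-(d + 1 : ℤ)))
    (x : EuclideanSpace ℝ (Fin d)) (N : ℕ) (hN : 1 ≤ N) (hxN : ‖x‖ ≤ N)
    (m : Fin d → ℤ) (hm : m ∈ latticeShell d N) (hM : 0 ≤ M) :
    ‖K (x + latticePoint d m) - K (latticePoint d m)‖
      ≤ M * ((π * N) ^ (d + 1))⁻¹ * ‖x‖ := by
  set p := latticePoint d m with hp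
  have hNpos : (0:ℝ) < N := by exact_mod_cast hN
  have hπN : (0:ℝ) < π * N := by positivity
  have hpge : 2 * π * N ≤ ‖p‖ := shell_norm_ge d N m hm
  have hz : ∀ z ∈ segment ℝ p (x + p), π * N ≤ ‖z‖ := by
    intro z hz
    rw [segment_eq_image'] at hz
    obtain ⟨θ, hθ, rfl⟩ := hz
    have hsub : x + p - p = x := by abel
    rw [hsub]
    have h1 : ‖θ • x‖ ≤ ‖x‖ := by
      rw [norm_smul, Real.norm_eq_abs, abs_of_nonneg hθ.1]
      nlinarith [norm_nonneg x, hθ.2]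
    have h2 : ‖p‖ ≤ ‖p + θ • x‖ + ‖θ • x‖ := by
      calc ‖p‖ = ‖p + θ • x - θ • x‖ := by rw [add_sub_cancel_right]
        _ ≤ ‖p + θ • x‖ + ‖θ • x‖ := norm_sub_le _ _
    have hπ1 : (1:ℝ) ≤ π := by linarith [Real.pi_gt_three]
    nlinarith
  have hne : ∀ z ∈ segment ℝ p (x + p), z ≠ 0 := by
    intro z hzmem h0
    have := hz z hzmem
    rw [h0, norm_zero] at this
    linarith
  have hbound : ∀ z ∈ segment ℝ p (x + p),
      ‖fderiv ℝ K z‖ ≤ M * ((π * N) ^ (d + 1))⁻¹ := by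
    intro z hzmem
    have h1 := (hdiff z (hne z hzmem)).2
    have hzge := hz z hzmem
    have hzpos : (0:ℝ) < ‖z‖ := lt_of_lt_of_le hπN hzge
    have h2 : ‖z‖ ^ (-(d + 1 : ℤ)) = (‖z‖ ^ (d + 1))⁻¹ := by
      rw [zpow_neg]
      norm_cast
    rw [h2] at h1
    refine h1.trans ?_
    gcongr
  have key := Convex.norm_image_sub_le_of_norm_fderiv_le
    (fun z hzmem => (hdiff z (hne z hzmem)).1) hbound (convex_segment p (x + p))
    (left_mem_segment ℝ p (x + p)) (right_mem_segment ℝ p (x + p))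
  have hsub : x + p - p = x := by abel
  rwa [hsub] at key

open Finset Real in
lemma key_bound (d : ℕ) (hd : 1 ≤ d)
    (K : EuclideanSpace ℝ (Fin d) → ℂ) (M : ℝ) (hM : 0 < M)
    (hdiff : ∀ y : EuclideanSpace ℝ (Fin d), y ≠ 0 →
      DifferentiableAt ℝ K y ∧ ‖fderiv ℝ K y‖ ≤ M * ‖y‖ ^ (-(d + 1 : ℤ)))
    (x : EuclideanSpace ℝ (Fin d)) (N : ℕ) (hN : 1 ≤ N) (hxN : ‖x‖ ≤ N)
    (hshellN : ‖∑ m ∈ latticeShell d N, K (latticePoint d m)‖ ≤ M / N ^ 2) :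
    ‖∑ m ∈ latticeShell d N, K (x + latticePoint d m)‖
      ≤ (M + 2 * d * M * ‖x‖) / N ^ 2 := by
  have hNpos : (0:ℝ) < N := by exact_mod_cast hN
  have hπ3 : (3:ℝ) < π := Real.pi_gt_three
  have hN1 : (1:ℝ) ≤ N := by exact_mod_cast hN
  have hπN : (0:ℝ) < π * N := by positivity
  -- per-term MVT bound
  have hterm : ∀ m ∈ latticeShell d N,
      ‖K (x + latticePoint d m) - K (latticePoint d m)‖
        ≤ M * ((π * N) ^ (d + 1))⁻¹ * ‖x‖ :=
    fun m hm => mvt_bound d hd K M hdiff x N hN hxN m hm hM.le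
  have hsplit : (∑ m ∈ latticeShell d N, K (x + latticePoint d m))
      = (∑ m ∈ latticeShell d N, (K (x + latticePoint d m) - K (latticePoint d m)))
        + ∑ m ∈ latticeShell d N, K (latticePoint d m) := by
    rw [Finset.sum_sub_distrib]; ring
  have habs : ‖∑ m ∈ latticeShell d N, K (x + latticePoint d m)‖
      ≤ (latticeShell d N).card * (M * ((π * N) ^ (d + 1))⁻¹ * ‖x‖) + M / N ^ 2 := by
    rw [hsplit]
    refine (norm_add_le _ _).trans (add_le_add ?_ hshellN)
    refine (norm_sum_le _ _).trans ?_
    calc ∑ m ∈ latticeShell d N, ‖K (x + latticePoint d m) - K (latticePoint d m)‖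
        ≤ ∑ _m ∈ latticeShell d N, M * ((π * N) ^ (d + 1))⁻¹ * ‖x‖ :=
          Finset.sum_le_sum hterm
      _ = (latticeShell d N).card * (M * ((π * N) ^ (d + 1))⁻¹ * ‖x‖) := by
          rw [Finset.sum_const, nsmul_eq_mul]
  refine habs.trans ?_
  have hcard : ((latticeShell d N).card : ℝ) ≤ 2 * d * (2 * N + 1) ^ (d - 1) := by
    exact_mod_cast shell_card d N
  have hstep : ((latticeShell d N).card : ℝ) * (M * ((π * N) ^ (d + 1))⁻¹ * ‖x‖)
      ≤ 2 * d * (2 * N + 1) ^ (d - 1) * (M * ((π * N) ^ (d + 1))⁻¹ * ‖x‖) := by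
    apply mul_le_mul_of_nonneg_right hcard
    positivity
  have hratio : ((2 * N + 1 : ℝ)) ^ (d - 1) * ((π * N) ^ (d + 1))⁻¹ ≤ ((N:ℝ) ^ 2)⁻¹ := by
    rw [← div_eq_mul_inv, ← one_div, div_le_div_iff₀ (by positivity) (by positivity)]
    have hdd : d + 1 = (d - 1) + 2 := by omega
    rw [hdd, pow_add]
    have h1 : ((2 * N + 1 : ℝ)) ^ (d - 1) ≤ (π * N) ^ (d - 1) := by
      apply pow_le_pow_left₀ (by positivity)
      nlinarith [hN1, hπ3]
    have h2 : ((N:ℝ)) ^ 2 ≤ (π * N) ^ 2 := by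
      rw [mul_pow]
      have hπ2 : (1:ℝ) ≤ π ^ 2 := by nlinarith [hπ3]
      nlinarith [mul_le_mul_of_nonneg_right hπ2 (sq_nonneg ((N:ℝ)))]
    nlinarith [pow_nonneg (le_of_lt hπN) (d-1), pow_nonneg (by positivity : (0:ℝ) ≤ 2*N+1) (d-1),
      sq_nonneg (N:ℝ)]
  have hnum : 2 * (d:ℝ) * (2 * N + 1) ^ (d - 1) * (M * ((π * N) ^ (d + 1))⁻¹ * ‖x‖)
      ≤ 2 * d * M * ‖x‖ / N ^ 2 := by
    have := mul_le_mul_of_nonneg_left hratio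
      (by positivity : (0:ℝ) ≤ 2 * d * M * ‖x‖)
    calc 2 * (d:ℝ) * (2 * N + 1) ^ (d - 1) * (M * ((π * N) ^ (d + 1))⁻¹ * ‖x‖)
        = 2 * d * M * ‖x‖ * ((2 * N + 1 : ℝ) ^ (d - 1) * ((π * N) ^ (d + 1))⁻¹) := by ring
      _ ≤ 2 * d * M * ‖x‖ * ((N:ℝ) ^ 2)⁻¹ := this
      _ = 2 * d * M * ‖x‖ / N ^ 2 := by rw [div_eq_mul_inv]
  calc ((latticeShell d N).card : ℝ) * (M * ((π * N) ^ (d + 1))⁻¹ * ‖x‖) + M / N ^ 2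
      ≤ 2 * d * M * ‖x‖ / N ^ 2 + M / N ^ 2 := add_le_add (hstep.trans hnum) le_rfl
    _ = (M + 2 * d * M * ‖x‖) / N ^ 2 := by ring

/-- If `K : ℝ^d → ℂ` is differentiable away from `0` with
`‖K'(y)‖ ≤ M·‖y‖^{−(d+1)}`, and the lattice shell sums satisfy
`|∑_{‖m‖_∞ = R} K(2πm)| ≤ M/R²` for every `R ≥ 1`, then for every `x ∉ 2πℤ^d`
the series of shell sums `∑_{R ≥ 1} |∑_{‖m‖_∞ = R} K(x + 2πm)|` converges absolutely,
i.e. `R ↦ ∑_{‖m‖_∞ = R} K(x + 2πm)` is (absolutely) summable over `R ≥ 1`. -/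
theorem periodization_shell_sums_summable (d : ℕ) (hd : 1 ≤ d)
    (K : EuclideanSpace ℝ (Fin d) → ℂ) (M : ℝ) (hM : 0 < M)
    (hdiff : ∀ y : EuclideanSpace ℝ (Fin d), y ≠ 0 →
      DifferentiableAt ℝ K y ∧ ‖fderiv ℝ K y‖ ≤ M * ‖y‖ ^ (-(d + 1 : ℤ)))
    (hshell : ∀ R : ℕ, 1 ≤ R →
      ‖∑ m ∈ latticeShell d R, K (latticePoint d m)‖ ≤ M / R ^ 2)
    (x : EuclideanSpace ℝ (Fin d)) (hx : ¬ ∃ n : Fin d → ℤ, x = latticePoint d n) :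
    Summable fun R : ℕ =>
      ‖∑ m ∈ latticeShell d (R + 1), K (x + latticePoint d m)‖ := by
  classical
  set C := M + 2 * d * M * ‖x‖ with hC
  set k := ⌈‖x‖⌉₊ with hk
  rw [← summable_nat_add_iff k]
  have hbdd : ∀ n : ℕ,
      ‖∑ m ∈ latticeShell d (n + k + 1), K (x + latticePoint d m)‖
        ≤ C / ((n + k + 1 : ℕ) : ℝ) ^ 2 := by
    intro n
    apply key_bound d hd K M hM hdiff x (n + k + 1) (by omega)
    · calc ‖x‖ ≤ (k : ℝ) := Nat.le_ceil _
        _ ≤ ((n + k + 1 : ℕ) : ℝ) := by exact_mod_cast Nat.le_add_left k (n+1) |>.trans (by omega)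
    · exact hshell (n + k + 1) (by omega)
  have hsum : Summable (fun n : ℕ => C / ((n + k + 1 : ℕ) : ℝ) ^ 2) := by
    have h0 : Summable (fun n : ℕ => C * (1 / (n : ℝ) ^ 2)) :=
      (Real.summable_one_div_nat_pow.2 one_lt_two).mul_left C
    have h1 := (summable_nat_add_iff (k + 1)).2 h0
    refine h1.congr fun n => ?_
    have : n + (k + 1) = n + k + 1 := by omega
    rw [this]
    rw [mul_one_div]
  refine Summable.of_nonneg_of_le (fun n => ?_) (fun n => hbdd n) hsum
  exact norm_nonneg _
end
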